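/- arXiv:1511.00638 — 2 statements merged into one kernel-verified Lean document; each statement's English description precedes it below -/
import Mathlib

section
/- Let Γ be a finitely generated torsion-free abelian group and φ: Γ → ℝ a homomorphism. Then there is a ring isomorphism R((Γ,φ)) ≅ (R[ker φ])((φ(Γ))), where R[ker φ] is the group ring of ker φ over R and (R[ker φ])((φ(Γ))) is the Novikov completion of the group ring of φ(Γ) over R[ker φ] with respect to the inclusion φ(Γ) ↪ ℝ. -/
/-- The underlying set of the Novikov completion `R((Γ,φ))`: formal sums `∑ λ_g · g`
(encoded as coefficient functions `Γ → R`) such that for every `c ∈ ℝ` only finitely many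
`g` with `λ_g ≠ 0` satisfy `φ(g) < c`. -/
def NovikovSeries (R : Type*) [CommRing R] (Γ : Type*) [AddCommGroup Γ] (φ : Γ →+ ℝ) :=
  {f : Γ → R // ∀ c : ℝ, {g : Γ | f g ≠ 0 ∧ φ g < c}.Finite}

/-- A commutative ring structure on `NovikovSeries R Γ φ` is "the" Novikov ring structure if
addition is pointwise, multiplication is the convolution product
`(λ·μ)(h) = ∑_{g₁+g₂=h} λ(g₁) μ(g₂)`, and the unit is the delta function at `0`. -/
def IsNovikovRing {R : Type*} [CommRing R] {Γ : Type*} [AddCommGroup Γ] (φ : Γ →+ ℝ)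
    (inst : CommRing (NovikovSeries R Γ φ)) : Prop :=
  letI := inst
  (∀ a b : NovikovSeries R Γ φ, ∀ h : Γ, (a * b).val h = ∑ᶠ g : Γ, a.val g * b.val (h - g)) ∧
  (∀ a b : NovikovSeries R Γ φ, (a + b).val = a.val + b.val) ∧
  ((1 : NovikovSeries R Γ φ).val 0 = 1 ∧
    ∀ g : Γ, g ≠ 0 → (1 : NovikovSeries R Γ φ).val g = 0)

/-- The pre-2025 Mathlib `AddMonoid.IsTorsionFree` (removed upstream), restated with its old meaning. -/
def AddMonoid.IsTorsionFree (G : Type*) [AddMonoid G] : Prop :=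
  ∀ g : G, g ≠ 0 → ¬IsOfFinAddOrder g

/-! A finitely generated subgroup of `ℝ` is free, so `φ` splits: `Γ ≃ φ(Γ) × ker φ` with `φ`
the first projection. Grouping the terms of a series by their value under `φ` turns a Novikov
series over `Γ` into one over `φ(Γ)`; each group of terms lies below a single level, hence is
finitely supported in `ker φ`, i.e. an element of `R[ker φ]`. Convolution over `Γ` is then the
iterated convolution over `φ(Γ)` and `ker φ`. -/

open Function

theorem AddMonoidAlgebra.coeff_mul_eq_finsum {R G : Type*} [Semiring R] [AddCommGroup G]
    (x y : AddMonoidAlgebra R G) (g : G) :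
    (x * y).coeff g = ∑ᶠ h, x.coeff h * y.coeff (g - h) := by
  rw [coeff_mul_apply_left, Finsupp.sum, finsum_eq_sum_of_support_subset (s := x.coeff.support)]
  · simp only [neg_add_eq_sub]
  · exact fun h hh => Finsupp.mem_support_iff.2 (left_ne_zero_of_mul hh)

theorem AddMonoidAlgebra.coeff_finsum_apply {R G ι : Type*} [Semiring R] [AddMonoid G]
    {f : ι → AddMonoidAlgebra R G} (hf : (support f).Finite) (g : G) :
    (∑ᶠ i, f i).coeff g = ∑ᶠ i, (f i).coeff g :=
  map_finsum ((Finsupp.applyAddHom g).comp (coeffAddEquiv (R := R) (M := G)).toAddMonoidHom) hf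

theorem AddMonoidHom.exists_addEquiv_range_prod_ker {Γ P : Type*} [AddCommGroup Γ]
    [AddGroup.FG Γ] [AddCommGroup P] [IsAddTorsionFree P] (f : Γ →+ P) :
    ∃ e : Γ ≃+ f.range × f.ker, ∀ g, ((e g).1 : P) = f g := by
  have : AddGroup.FG f.range := AddGroup.fg_of_surjective f.rangeRestrict_surjective
  have : Module.Finite ℤ f.range := Module.Finite.iff_addGroup_fg.2 ‹_›
  obtain ⟨s, hs⟩ := f.rangeRestrict.toIntLinearMap.exists_rightInverse_of_surjective
    (LinearMap.range_eq_top.2 f.rangeRestrict_surjective)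
  have hexact : Exact f.ker.subtype.toIntLinearMap f.rangeRestrict.toIntLinearMap :=
    AddMonoidHom.exact_iff.2 (by ext; simp)
  let e := (hexact.splitSurjectiveEquiv Subtype.val_injective ⟨s, hs⟩).1
  have he := (hexact.splitSurjectiveEquiv Subtype.val_injective ⟨s, hs⟩).2.2
  refine ⟨e.toAddEquiv.trans AddEquiv.prodComm, fun g => ?_⟩
  simpa using congr(($he g : P)).symm

noncomputable section

namespace NovikovSeries

variable {R : Type*} [CommRing R] {Γ : Type*} [AddCommGroup Γ] {φ : Γ →+ ℝ}

@[ext]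
theorem ext {f f' : NovikovSeries R Γ φ} (h : ∀ g, f.val g = f'.val g) : f = f' :=
  Subtype.ext (funext h)

theorem bddBelow_image_support (f : NovikovSeries R Γ φ) : BddBelow (φ '' support f.val) := by
  refine (((f.2 0).image φ).bddBelow.union (bddBelow_Ici (a := 0))).mono ?_
  rintro _ ⟨g, hg, rfl⟩
  by_cases hneg : φ g < 0
  · exact .inl ⟨g, ⟨hg, hneg⟩, rfl⟩
  · exact .inr (not_lt.1 hneg)

theorem finite_support_mul_sub (a b : NovikovSeries R Γ φ) (x : Γ) :
    (support fun g => a.val g * b.val (x - g)).Finite := by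
  obtain ⟨m, hm⟩ := b.bddBelow_image_support
  refine (a.2 (φ x - m + 1)).subset fun g hg => ⟨left_ne_zero_of_mul hg, ?_⟩
  have := hm ⟨x - g, right_ne_zero_of_mul hg, rfl⟩
  rw [map_sub] at this
  linarith

section Curry

variable {H K : Type*} [AddCommGroup H] [AddCommGroup K] {ψ : H →+ ℝ}
  (e : Γ ≃+ H × K) (he : ∀ g, φ g = ψ (e g).1)

theorem finite_support_apply_symm (he : ∀ g, φ g = ψ (e g).1) (f : NovikovSeries R Γ φ)
    (h : H) : (support fun k => f.val (e.symm (h, k))).Finite := by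
  refine ((f.2 (ψ h + 1)).preimage
    (e.symm.injective.comp (Prod.mk_right_injective h)).injOn).subset fun k hk => ⟨hk, ?_⟩
  simp [he]

def curryCoeff (f : NovikovSeries R Γ φ) (h : H) : AddMonoidAlgebra R K :=
  .ofCoeff (.ofSupportFinite _ (finite_support_apply_symm e he f h))

@[simp]
theorem coeff_curryCoeff (f : NovikovSeries R Γ φ) (h : H) (k : K) :
    (curryCoeff e he f h).coeff k = f.val (e.symm (h, k)) := rfl

theorem finite_curryCoeff (he : ∀ g, φ g = ψ (e g).1) (f : NovikovSeries R Γ φ) (c : ℝ) :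
    {h | curryCoeff e he f h ≠ 0 ∧ ψ h < c}.Finite := by
  refine ((f.2 c).image fun g => (e g).1).subset ?_
  rintro h ⟨hh, hc⟩
  obtain ⟨k, hk⟩ : ∃ k, f.val (e.symm (h, k)) ≠ 0 := by
    contrapose! hh
    ext k
    simp [hh]
  exact ⟨e.symm (h, k), ⟨hk, by simpa [he]⟩, by simp⟩

def curry (f : NovikovSeries R Γ φ) : NovikovSeries (AddMonoidAlgebra R K) H ψ :=
  ⟨curryCoeff e he f, finite_curryCoeff e he f⟩

@[simp]
theorem coeff_curry (f : NovikovSeries R Γ φ) (h : H) (k : K) :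
    ((curry e he f).val h).coeff k = f.val (e.symm (h, k)) := rfl

theorem finite_uncurry (he : ∀ g, φ g = ψ (e g).1)
    (F : NovikovSeries (AddMonoidAlgebra R K) H ψ) (c : ℝ) :
    {g | (F.val (e g).1).coeff (e g).2 ≠ 0 ∧ φ g < c}.Finite := by
  refine ((F.2 c).biUnion fun h _ =>
    (F.val h).coeff.support.finite_toSet.image fun k => e.symm (h, k)).subset ?_
  rintro g ⟨hg, hc⟩
  refine Set.mem_biUnion (x := (e g).1) ⟨fun h0 => hg (by rw [h0]; rfl), by rwa [he] at hc⟩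
    ⟨(e g).2, by simpa using hg, by simp⟩

def uncurry (F : NovikovSeries (AddMonoidAlgebra R K) H ψ) : NovikovSeries R Γ φ :=
  ⟨fun g => (F.val (e g).1).coeff (e g).2, finite_uncurry e he F⟩

@[simp]
theorem uncurry_apply_symm (F : NovikovSeries (AddMonoidAlgebra R K) H ψ) (h : H) (k : K) :
    (uncurry e he F).val (e.symm (h, k)) = (F.val h).coeff k := by
  simp [uncurry]

theorem curry_uncurry (F : NovikovSeries (AddMonoidAlgebra R K) H ψ) :
    curry e he (uncurry e he F) = F := by
  ext h k
  simp

theorem uncurry_curry (f : NovikovSeries R Γ φ) : uncurry e he (curry e he f) = f := by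
  ext g
  simp [uncurry, curry]

variable [instA : CommRing (NovikovSeries R Γ φ)]
  [instB : CommRing (NovikovSeries (AddMonoidAlgebra R K) H ψ)]

theorem curry_add (hA : IsNovikovRing φ instA) (hB : IsNovikovRing ψ instB)
    (a b : NovikovSeries R Γ φ) : curry e he (a + b) = curry e he a + curry e he b := by
  ext h k
  simp [hA.2.1, hB.2.1]

theorem curry_mul (hA : IsNovikovRing φ instA) (hB : IsNovikovRing ψ instB)
    (a b : NovikovSeries R Γ φ) : curry e he (a * b) = curry e he a * curry e he b := by
  ext h k
  have hfin := (finite_support_mul_sub a b (e.symm (h, k))).preimage e.symm.injective.injOn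
  calc (a * b).val (e.symm (h, k))
      = ∑ᶠ g, a.val g * b.val (e.symm (h, k) - g) := hA.1 a b _
    _ = ∑ᶠ p : H × K, a.val (e.symm p) * b.val (e.symm (h, k) - e.symm p) :=
      (finsum_comp_equiv e.symm.toEquiv).symm
    _ = ∑ᶠ (q : H) (j : K), a.val (e.symm (q, j)) * b.val (e.symm (h, k) - e.symm (q, j)) :=
      finsum_curry _ hfin
    _ = ∑ᶠ q, ((curry e he a).val q * (curry e he b).val (h - q)).coeff k := by
      simp [AddMonoidAlgebra.coeff_mul_eq_finsum, ← map_sub]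
    _ = (∑ᶠ q, (curry e he a).val q * (curry e he b).val (h - q)).coeff k :=
      (AddMonoidAlgebra.coeff_finsum_apply (finite_support_mul_sub _ _ h) k).symm
    _ = ((curry e he a * curry e he b).val h).coeff k := by rw [hB.1]

def curryRingEquiv (hA : IsNovikovRing φ instA) (hB : IsNovikovRing ψ instB) :
    NovikovSeries R Γ φ ≃+* NovikovSeries (AddMonoidAlgebra R K) H ψ where
  toFun := curry e he
  invFun := uncurry e he
  left_inv := uncurry_curry e he
  right_inv := curry_uncurry e he
  map_mul' := curry_mul e he hA hB
  map_add' := curry_add e he hA hB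

end Curry

end NovikovSeries

end

theorem novikovSeries_decomposition_general (R : Type*) [CommRing R]
    (Γ : Type*) [AddCommGroup Γ] [AddGroup.FG Γ]
    (φ : Γ →+ ℝ)
    [instA : CommRing (NovikovSeries R Γ φ)] (hA : IsNovikovRing φ instA)
    [instB : CommRing (NovikovSeries (AddMonoidAlgebra R φ.ker) φ.range φ.range.subtype)]
    (hB : IsNovikovRing φ.range.subtype instB) :
    Nonempty (NovikovSeries R Γ φ ≃+*
      NovikovSeries (AddMonoidAlgebra R φ.ker) φ.range φ.range.subtype) := by
  obtain ⟨e, he⟩ := φ.exists_addEquiv_range_prod_ker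
  exact ⟨NovikovSeries.curryRingEquiv e (fun g => (he g).symm) hA hB⟩

/-- For a finitely generated torsion-free abelian group `Γ` and a homomorphism
`φ : Γ →+ ℝ`, there is a ring isomorphism `R((Γ,φ)) ≅ (R[ker φ])((φ(Γ)))`, where the right
hand side is the Novikov completion of the group ring of `φ(Γ) ⊆ ℝ` over the group ring
`R[ker φ]`, with respect to the inclusion `φ(Γ) ↪ ℝ`. -/
theorem novikovSeries_decomposition (R : Type*) [CommRing R]
    (Γ : Type*) [AddCommGroup Γ] [AddGroup.FG Γ] (htf : AddMonoid.IsTorsionFree Γ)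
    (φ : Γ →+ ℝ)
    [instA : CommRing (NovikovSeries R Γ φ)] (hA : IsNovikovRing φ instA)
    [instB : CommRing (NovikovSeries (AddMonoidAlgebra R φ.ker) φ.range φ.range.subtype)]
    (hB : IsNovikovRing φ.range.subtype instB) :
    Nonempty (NovikovSeries R Γ φ ≃+*
      NovikovSeries (AddMonoidAlgebra R φ.ker) φ.range φ.range.subtype) :=
  novikovSeries_decomposition_general R Γ φ (instA := instA) hA (instB := instB) hB
end

section
/- Let R be an integral domain, Γ a finitely generated torsion-free abelian group, and φ: Γ → ℝ a homomorphism. Then the Novikov ring R((Γ,φ)) is an integral domain. -/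
open Function

section LeadingTerm

variable {Γ L R : Type*} [AddCommGroup Γ] [AddCommGroup L] [LinearOrder L] [IsOrderedAddMonoid L]

theorem finsum_mul_sub_add_of_isLeast [NonUnitalNonAssocSemiring R] {e : Γ →+ L}
    (he : Injective e) {a b : Γ → R} {g₀ h₀ : Γ}
    (ha : IsLeast (e '' support a) (e g₀)) (hb : IsLeast (e '' support b) (e h₀)) :
    ∑ᶠ g, a g * b (g₀ + h₀ - g) = a g₀ * b h₀ := by
  refine (finsum_eq_single _ g₀ fun g hg => ?_).trans (by rw [add_sub_cancel_left])
  by_cases hag : a g = 0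
  · rw [hag, zero_mul]
  have hlt : e g₀ < e g := (ha.2 ⟨g, hag, rfl⟩).lt_of_ne (he.ne (Ne.symm hg))
  have hb0 : b (g₀ + h₀ - g) = 0 := by
    by_contra hne
    have hle := hb.2 ⟨_, hne, rfl⟩
    rw [map_sub, map_add] at hle
    refine hle.not_gt (sub_lt_iff_lt_add.mpr ?_)
    rw [add_comm (e h₀)]
    gcongr
  rw [hb0, mul_zero]

end LeadingTerm

section LexProd

variable {Γ M : Type*} [AddCommGroup Γ] [AddCommGroup M]

def AddMonoidHom.lexProd (φ : Γ →+ ℝ) (ψ : Γ →+ M) : Γ →+ ℝ ×ₗ M :=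
  (toLexAddEquiv (ℝ × M)).toAddMonoidHom.comp (φ.prod ψ)

theorem AddMonoidHom.lexProd_injective (φ : Γ →+ ℝ) {ψ : Γ →+ M} (hψ : Injective ψ) :
    Injective (φ.lexProd ψ) := fun _ _ h => hψ (congrArg Prod.snd (toLex.injective h))

theorem AddMonoidHom.lexProd_lt_lexProd [LT M] (φ : Γ →+ ℝ) (ψ : Γ →+ M) {g h : Γ}
    (hgh : φ g < φ h) : φ.lexProd ψ g < φ.lexProd ψ h :=
  Prod.Lex.lt_iff.mpr (Or.inl hgh)

end LexProd

theorem AddCommGroup.exists_injective_lex_of_fg (Γ : Type*) [AddCommGroup Γ] [AddGroup.FG Γ]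
    [IsAddTorsionFree Γ] : ∃ (n : ℕ) (ψ : Γ →+ Lex (Fin n → ℤ)), Injective ψ := by
  have : Module.Finite ℤ Γ := Module.Finite.iff_addGroup_fg.mpr ‹_›
  let b := Module.finBasis ℤ Γ
  exact ⟨_, (toLexAddEquiv _).toAddMonoidHom.comp b.equivFun.toAddMonoidHom,
    (toLexAddEquiv _).injective.comp b.equivFun.injective⟩

namespace NovikovSeries

variable {R Γ L : Type*} [CommRing R] [AddCommGroup Γ] {φ : Γ →+ ℝ} [LinearOrder L]

theorem exists_isLeast_image_support (f : NovikovSeries R Γ φ) (hf : f.val ≠ 0) {e : Γ → L}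
    (he : ∀ g h, φ g < φ h → e g < e h) : ∃ g₀, IsLeast (e '' support f.val) (e g₀) := by
  obtain ⟨g₁, hg₁⟩ := support_nonempty_iff.mpr hf
  -- Only finitely many support elements lie below level `φ g₁ + 1`, and all others are `e`-larger.
  obtain ⟨g₀, ⟨hg₀, -⟩, hmin⟩ := Set.exists_min_image _ e (f.property (φ g₁ + 1))
    ⟨g₁, hg₁, lt_add_one _⟩
  refine ⟨g₀, ⟨g₀, hg₀, rfl⟩, ?_⟩
  rintro _ ⟨g, hg, rfl⟩
  by_cases hφg : φ g < φ g₁ + 1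
  · exact hmin g ⟨hg, hφg⟩
  · have hφ : φ g₀ ≤ φ g₁ := not_lt.mp fun h => (hmin g₁ ⟨hg₁, lt_add_one _⟩).not_gt (he _ _ h)
    exact (he _ _ (by linarith)).le

end NovikovSeries

namespace IsNovikovRing

variable {R Γ : Type*} [CommRing R] [AddCommGroup Γ] {φ : Γ →+ ℝ}
  {inst : CommRing (NovikovSeries R Γ φ)}

theorem val_zero (hN : IsNovikovRing φ inst) : (0 : NovikovSeries R Γ φ).val = 0 := by
  have h := hN.2.1 0 0
  rw [add_zero] at h
  exact left_eq_add.mp h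

theorem val_ne_zero (hN : IsNovikovRing φ inst) {a : NovikovSeries R Γ φ} (ha : a ≠ 0) :
    a.val ≠ 0 := fun h => ha (Subtype.ext (h.trans hN.val_zero.symm))

theorem nontrivial [Nontrivial R] (hN : IsNovikovRing φ inst) :
    Nontrivial (NovikovSeries R Γ φ) :=
  ⟨1, 0, fun h => one_ne_zero (hN.2.2.1.symm.trans (by rw [h, hN.val_zero]; rfl))⟩

theorem noZeroDivisors [NoZeroDivisors R] (hN : IsNovikovRing φ inst) {L : Type*}
    [AddCommGroup L] [LinearOrder L] [IsOrderedAddMonoid L] {e : Γ →+ L} (he : Injective e)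
    (hφe : ∀ g h, φ g < φ h → e g < e h) : NoZeroDivisors (NovikovSeries R Γ φ) := by
  refine ⟨fun {a b} hab => or_iff_not_and_not.mpr fun ⟨ha, hb⟩ => ?_⟩
  obtain ⟨g₀, hg₀⟩ := a.exists_isLeast_image_support (hN.val_ne_zero ha) hφe
  obtain ⟨h₀, hh₀⟩ := b.exists_isLeast_image_support (hN.val_ne_zero hb) hφe
  have hlead : (a * b).val (g₀ + h₀) = a.val g₀ * b.val h₀ := by
    rw [hN.1, finsum_mul_sub_add_of_isLeast he hg₀ hh₀]
  rw [hab, hN.val_zero] at hlead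
  exact mul_ne_zero (he.mem_set_image.mp hg₀.1) (he.mem_set_image.mp hh₀.1) hlead.symm

end IsNovikovRing

/-- For an integral domain `R`, a finitely generated torsion-free abelian group
`Γ`, and a homomorphism `φ : Γ →+ ℝ`, the Novikov ring `R((Γ,φ))` is an integral domain. -/
theorem novikovSeries_isDomain (R : Type*) [CommRing R] [IsDomain R]
    (Γ : Type*) [AddCommGroup Γ] [AddGroup.FG Γ] (htf : AddMonoid.IsTorsionFree Γ)
    (φ : Γ →+ ℝ)
    [inst : CommRing (NovikovSeries R Γ φ)] (hspec : IsNovikovRing φ inst) :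
    IsDomain (NovikovSeries R Γ φ) := by
  have : IsAddTorsionFree Γ := .of_not_isOfFinAddOrder htf
  obtain ⟨n, ψ, hψ⟩ := AddCommGroup.exists_injective_lex_of_fg Γ
  have := hspec.nontrivial
  have := hspec.noZeroDivisors (φ.lexProd_injective hψ) fun _ _ => φ.lexProd_lt_lexProd ψ
  exact NoZeroDivisors.to_isDomain _
end
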